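/- Let σ > 0, ρ(x) = exp(-|x|/σ)/(2σ), and let u : ℝ → ℝ be measurable with 0 ≤ u ≤ 1, u nontrivial (positive on a set of positive measure in (-∞, h)), and u(x) = 0 for x ≥ h. Then -(ρ' ⋆ u)(h) > 0. -/

import Mathlib

/-! For `x > 0` the kernel `-ρ' σ x = exp (-x / σ) / (2σ²)` is positive and integrable on `(0, ∞)`,
while `u` lives on `(-∞, h)`. So `y ↦ -ρ' σ (h - y) * u y` is integrable, nonnegative, and positive
exactly where `u` is positive left of `h`, a set of positive measure. -/

open MeasureTheory Set

noncomputable def ρ' (σ x : ℝ) : ℝ := -Real.sign x * Real.exp (-|x| / σ) / (2 * σ ^ 2)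

theorem integrableOn_Iio_comp_sub_left {E : Type*} [NormedAddCommGroup E] {k : ℝ → E} (h : ℝ)
    (hk : IntegrableOn k (Ioi 0)) : IntegrableOn (fun y => k (h - y)) (Iio h) := by
  have hpre : (fun y : ℝ => h - y) ⁻¹' Ioi 0 = Iio h := by
    ext y
    simp
  rw [← hpre]
  exact ((Measure.measurePreserving_sub_left volume h).integrableOn_comp_preimage
    (Homeomorph.subLeft h).measurableEmbedding).mpr hk

theorem integral_comp_sub_left_mul_pos {k u : ℝ → ℝ} {h C : ℝ} (hk : IntegrableOn k (Ioi 0))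
    (hk_pos : ∀ x, 0 < x → 0 < k x) (hu : Measurable u) (h0 : ∀ x, 0 ≤ u x)
    (hC : ∀ x, u x ≤ C) (hz : ∀ x, h ≤ x → u x = 0)
    (hnt : 0 < volume {y : ℝ | y < h ∧ 0 < u y}) :
    0 < ∫ y, k (h - y) * u y := by
  have hvanish : ∀ y ∉ Iio h, k (h - y) * u y = 0 := fun y hy => by
    rw [hz y (not_lt.mp hy), mul_zero]
  have hint : IntegrableOn (fun y => k (h - y) * u y) (Iio h) :=
    (integrableOn_Iio_comp_sub_left h hk).mul_bdd hu.aestronglyMeasurable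
      (ae_of_all _ fun y => by rw [Real.norm_of_nonneg (h0 y)]; exact hC y)
  have hnonneg : 0 ≤ᵐ[volume.restrict (Iio h)] fun y => k (h - y) * u y := by
    filter_upwards [ae_restrict_mem measurableSet_Iio] with y hy
    exact mul_nonneg (hk_pos _ (sub_pos.mpr hy)).le (h0 y)
  rw [← setIntegral_eq_integral_of_forall_compl_eq_zero hvanish,
    setIntegral_pos_iff_support_of_nonneg_ae hnonneg hint]
  refine hnt.trans_le (measure_mono ?_)
  rintro y ⟨hy, hpos⟩
  exact ⟨(mul_pos (hk_pos _ (sub_pos.mpr hy)) hpos).ne', hy⟩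

theorem neg_ρ'_of_pos {σ x : ℝ} (hx : 0 < x) : -ρ' σ x = Real.exp (-x / σ) / (2 * σ ^ 2) := by
  simp only [ρ', Real.sign_of_pos hx, abs_of_pos hx]
  ring

theorem integrableOn_neg_ρ'_Ioi {σ : ℝ} (hσ : 0 < σ) :
    IntegrableOn (fun x => -ρ' σ x) (Ioi 0) := by
  have hexp : IntegrableOn (fun x => Real.exp (-x / σ) / (2 * σ ^ 2)) (Ioi 0) := by
    refine IntegrableOn.congr_fun
      ((exp_neg_integrableOn_Ioi 0 (inv_pos.mpr hσ)).div_const (2 * σ ^ 2))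
      (fun x _ => ?_) measurableSet_Ioi
    rw [neg_mul, inv_mul_eq_div, neg_div]
  exact hexp.congr_fun (fun x hx => (neg_ρ'_of_pos hx).symm) measurableSet_Ioi

theorem separatrix_speed_pos (σ h : ℝ) (hσ : 0 < σ) (u : ℝ → ℝ)
    (hu : Measurable u) (h0 : ∀ x, 0 ≤ u x) (h1 : ∀ x, u x ≤ 1)
    (hz : ∀ x, h ≤ x → u x = 0)
    (hnt : 0 < volume {y : ℝ | y < h ∧ 0 < u y}) :
    0 < -(∫ y, ρ' σ (h - y) * u y) := by
  have hpos := integral_comp_sub_left_mul_pos (integrableOn_neg_ρ'_Ioi hσ)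
    (fun x hx => by rw [neg_ρ'_of_pos hx]; positivity) hu h0 h1 hz hnt
  simpa only [neg_mul, integral_neg] using hpos
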